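/- Fix a ∈ (-1,1) and set c = (a-1)/2. Define g : [-1,1] → ℝ by g(x) = c for x < a, g(a) = c + 1/2, and g(x) = c + 1 for x > a. Then the Legendre coefficients of g satisfy c_0(g) = 0 and c_k(g) = (1/2)(P_{k-1}(a) - P_{k+1}(a)) for every integer k ≥ 1. -/

import Mathlib

open MeasureTheory Real Polynomial Finset

/-- The `n`-th Legendre polynomial (via Rodrigues' formula), normalized so that `P n 1 = 1`. -/
noncomputable def legendre (n : ℕ) : Polynomial ℝ :=
  ((2 ^ n * n.factorial : ℝ)⁻¹) • derivative^[n] ((X ^ 2 - 1) ^ n)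

/-- The `k`-th Legendre coefficient of `f : [-1,1] → ℝ`:  `c_k(f) = (k + 1/2) ∫_{-1}^1 f t P_k t dt`. -/
noncomputable def legendreCoeff (f : ℝ → ℝ) (k : ℕ) : ℝ :=
  ((k : ℝ) + 1 / 2) * ∫ t in (-1 : ℝ)..1, f t * (legendre k).eval t

/-- The `p`-th partial Legendre sum of `f`:  `S_p(f)(x) = ∑_{k=0}^p c_k(f) P_k(x)`. -/
noncomputable def legendreSum (f : ℝ → ℝ) (p : ℕ) (x : ℝ) : ℝ :=
  ∑ k ∈ Finset.range (p + 1), legendreCoeff f k * (legendre k).eval x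

/-!
From Rodrigues' formula and the identity
`(d/dx)² (x² - 1)^(n+2) = 2(n+2)(2n+3) (x² - 1)^(n+1) + 4(n+2)(n+1) (x² - 1)^n`
one gets Bonnet's recurrence `P'_{n+2} - P'_n = (2n+3) P_{n+1}`, so `(P_{n+2} - P_n)/(2n+3)` is an
antiderivative of `P_{n+1}`; it vanishes at `±1` because `P_m(±1) = (±1)^m`. Splitting
`∫_{-1}^1 g P_k` at `a`, the constant part of `g` integrates to zero against `P_k` for `k ≥ 1`,
and the jump contributes `∫_a^1 P_k`. For `k = 0` the value of `c` makes the mean of `g` zero.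
-/

namespace Polynomial

variable {R : Type*} [CommRing R]

theorem eval_iterate_derivative_X_sub_C_pow_mul (r : R) (n : ℕ) (q : R[X]) :
    (derivative^[n] ((X - C r) ^ n * q)).eval r = n.factorial * q.eval r := by
  rw [iterate_derivative_mul, eval_finsetSum, Finset.sum_eq_single 0]
  · simp [iterate_derivative_X_sub_pow_self]
  · intro k hk hk0
    rw [iterate_derivative_X_sub_pow, Nat.sub_sub_self (Finset.mem_range_succ_iff.mp hk)]
    simp [hk0]
  · simp

theorem iterate_derivative_two_sq_sub_one_pow (n : ℕ) :
    derivative^[2] ((X ^ 2 - 1 : R[X]) ^ (n + 2)) =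
      C (2 * (n + 2) * (2 * n + 3) : R) * (X ^ 2 - 1) ^ (n + 1)
        + C (4 * (n + 2) * (n + 1) : R) * (X ^ 2 - 1) ^ n := by
  have hu : derivative (X ^ 2 - 1 : R[X]) = C 2 * X := by
    rw [derivative_sub, derivative_X_sq, derivative_one, sub_zero]
  have hX : (X ^ 2 : R[X]) = (X ^ 2 - 1) + 1 := by ring
  simp only [Function.iterate_succ, Function.iterate_zero, Function.comp_apply, id,
    derivative_pow_succ, derivative_mul, hu, derivative_C, derivative_X]
  simp only [map_add, map_mul, map_natCast, map_ofNat, map_one]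
  push_cast
  linear_combination (8 * ((n : R[X]) + 2) * (n + 1) * (X ^ 2 - 1) ^ n) * hX

end Polynomial

theorem derivative_legendre (n : ℕ) :
    derivative (legendre n) =
      (2 ^ n * n.factorial : ℝ)⁻¹ • derivative^[n + 1] ((X ^ 2 - 1) ^ n) := by
  rw [legendre, derivative_smul, Function.iterate_succ_apply']

theorem derivative_legendre_add_two (n : ℕ) :
    derivative (legendre (n + 2)) =
      derivative (legendre n) + C (2 * n + 3 : ℝ) * legendre (n + 1) := by
  have hD : derivative^[n + 3] ((X ^ 2 - 1 : ℝ[X]) ^ (n + 2)) =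
      C (2 * (n + 2) * (2 * n + 3) : ℝ) * derivative^[n + 1] ((X ^ 2 - 1) ^ (n + 1))
        + C (4 * (n + 2) * (n + 1) : ℝ) * derivative^[n + 1] ((X ^ 2 - 1) ^ n) := by
    rw [show n + 3 = n + 1 + 2 from rfl, Function.iterate_add_apply,
      iterate_derivative_two_sq_sub_one_pow, iterate_map_add, iterate_derivative_C_mul,
      iterate_derivative_C_mul]
  have hA : (2 ^ (n + 2) * (n + 2).factorial : ℝ)⁻¹ * (2 * (n + 2) * (2 * n + 3)) =
      (2 * n + 3) * (2 ^ (n + 1) * (n + 1).factorial : ℝ)⁻¹ := by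
    rw [Nat.factorial_succ (n + 1)]
    push_cast
    field_simp
    ring
  have hB : (2 ^ (n + 2) * (n + 2).factorial : ℝ)⁻¹ * (4 * (n + 2) * (n + 1)) =
      (2 ^ n * n.factorial : ℝ)⁻¹ := by
    rw [Nat.factorial_succ (n + 1), Nat.factorial_succ n]
    push_cast
    field_simp
    ring
  rw [derivative_legendre, derivative_legendre, hD, legendre]
  simp only [smul_eq_C_mul]
  rw [mul_add, ← mul_assoc, ← mul_assoc, ← C_mul, ← C_mul, hA, hB, C_mul]
  ring

theorem legendre_eval_one (n : ℕ) : (legendre n).eval 1 = 1 := by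
  have h : (X ^ 2 - 1 : ℝ[X]) ^ n = (X - C 1) ^ n * (X + 1) ^ n := by
    rw [← mul_pow]; simp only [C_1]; ring
  rw [legendre, eval_smul, h, eval_iterate_derivative_X_sub_C_pow_mul, smul_eq_mul]
  simp only [eval_pow, eval_add, eval_X, eval_one]
  field_simp
  norm_num

theorem legendre_eval_neg_one (n : ℕ) : (legendre n).eval (-1) = (-1) ^ n := by
  have h : (X ^ 2 - 1 : ℝ[X]) ^ n = (X - C (-1)) ^ n * (X - 1) ^ n := by
    rw [← mul_pow]; simp only [C_neg, C_1]; ring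
  rw [legendre, eval_smul, h, eval_iterate_derivative_X_sub_C_pow_mul, smul_eq_mul]
  simp only [eval_pow, eval_sub, eval_X, eval_one]
  field_simp
  rw [← mul_pow]
  norm_num

theorem integral_legendre_succ (n : ℕ) (s t : ℝ) :
    ∫ x in s..t, (legendre (n + 1)).eval x =
      (2 * n + 3 : ℝ)⁻¹ * ((legendre (n + 2) - legendre n).eval t
        - (legendre (n + 2) - legendre n).eval s) := by
  have hQ : derivative (C (2 * n + 3 : ℝ)⁻¹ * (legendre (n + 2) - legendre n)) =
      legendre (n + 1) := by
    rw [derivative_C_mul, derivative_sub, derivative_legendre_add_two, add_sub_cancel_left,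
      ← mul_assoc, ← C_mul, inv_mul_cancel₀ (by positivity), C_1, one_mul]
  simp_rw [← hQ]
  rw [intervalIntegral.integral_eq_sub_of_hasDerivAt (fun x _ => Polynomial.hasDerivAt _ x)
    ((Polynomial.continuous _).intervalIntegrable _ _)]
  simp only [eval_mul, eval_C]
  ring

section

open Set

theorem intervalIntegral.integral_mul_of_eqOn_Ioo {a b c : ℝ} (hab : a ≤ b) {g : ℝ → ℝ}
    (f : ℝ → ℝ) (hg : EqOn g (fun _ => c) (Ioo a b)) :
    ∫ x in a..b, g x * f x = c * ∫ x in a..b, f x := by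
  rw [intervalIntegral.integral_of_le hab, intervalIntegral.integral_of_le hab,
    integral_Ioc_eq_integral_Ioo, integral_Ioc_eq_integral_Ioo,
    ← MeasureTheory.integral_const_mul]
  exact setIntegral_congr_fun measurableSet_Ioo fun x hx => by rw [hg hx]

theorem IntervalIntegrable.mul_of_eqOn_Ioo {a b c : ℝ} (hab : a ≤ b) {g f : ℝ → ℝ}
    (hf : IntervalIntegrable f volume a b) (hg : EqOn g (fun _ => c) (Ioo a b)) :
    IntervalIntegrable (fun x => g x * f x) volume a b := by
  rw [intervalIntegrable_iff_integrableOn_Ioo_of_le hab] at hf ⊢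
  exact IntegrableOn.congr_fun (hf.const_mul c) (fun x hx => by rw [hg hx]) measurableSet_Ioo

theorem intervalIntegral.integral_step_mul {a b d c₁ c₂ : ℝ} (hab : a ≤ b) (hbd : b ≤ d)
    {g f : ℝ → ℝ} (hg₁ : EqOn g (fun _ => c₁) (Ioo a b)) (hg₂ : EqOn g (fun _ => c₂) (Ioo b d))
    (hf₁ : IntervalIntegrable f volume a b) (hf₂ : IntervalIntegrable f volume b d) :
    ∫ x in a..d, g x * f x = (c₁ * ∫ x in a..b, f x) + c₂ * ∫ x in b..d, f x := by
  rw [← intervalIntegral.integral_add_adjacent_intervals (hf₁.mul_of_eqOn_Ioo hab hg₁)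
    (hf₂.mul_of_eqOn_Ioo hbd hg₂), integral_mul_of_eqOn_Ioo hab f hg₁,
    integral_mul_of_eqOn_Ioo hbd f hg₂]

end

theorem stmt_4_general (a : ℝ) (ha : a ∈ Set.Ioo (-1 : ℝ) 1) (c : ℝ) (hc : c = (a - 1) / 2)
    (g : ℝ → ℝ)
    (hg₁ : ∀ x : ℝ, x < a → g x = c)
    (hg₃ : ∀ x : ℝ, a < x → g x = c + 1) :
    legendreCoeff g 0 = 0 ∧
      ∀ k : ℕ, 1 ≤ k →
        legendreCoeff g k = (1 / 2) * ((legendre (k - 1)).eval a - (legendre (k + 1)).eval a) := by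
  have hstep (p : ℝ[X]) : ∫ t in (-1 : ℝ)..1, g t * p.eval t =
      (c * ∫ t in (-1 : ℝ)..a, p.eval t) + (c + 1) * ∫ t in a..1, p.eval t :=
    intervalIntegral.integral_step_mul ha.1.le ha.2.le (fun x hx => hg₁ x hx.2)
      (fun x hx => hg₃ x hx.1) (p.continuous.intervalIntegrable _ _)
      (p.continuous.intervalIntegrable _ _)
  refine ⟨?_, fun k hk => ?_⟩
  · have h₀ : legendre 0 = 1 := by simp [legendre]
    rw [legendreCoeff, hstep, h₀]
    simp only [eval_one, intervalIntegral.integral_const, smul_eq_mul, hc]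
    ring
  · obtain ⟨n, rfl⟩ := Nat.exists_eq_add_of_le' hk
    rw [legendreCoeff, hstep, integral_legendre_succ, integral_legendre_succ]
    simp only [eval_sub, legendre_eval_one, legendre_eval_neg_one, Nat.add_sub_cancel]
    push_cast
    field_simp
    ring

/-- the Legendre coefficients of the step function `g`. -/
theorem stmt_4 (a : ℝ) (ha : a ∈ Set.Ioo (-1 : ℝ) 1) (c : ℝ) (hc : c = (a - 1) / 2)
    (g : ℝ → ℝ)
    (hg₁ : ∀ x : ℝ, x < a → g x = c)
    (hg₂ : g a = c + 1 / 2)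
    (hg₃ : ∀ x : ℝ, a < x → g x = c + 1) :
    legendreCoeff g 0 = 0 ∧
      ∀ k : ℕ, 1 ≤ k →
        legendreCoeff g k = (1 / 2) * ((legendre (k - 1)).eval a - (legendre (k + 1)).eval a) :=
  stmt_4_general a ha c hc g hg₁ hg₃
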